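/- arXiv:2110.09938 — 4 statements merged into one kernel-verified Lean document; each statement's English description precedes it below -/
import Mathlib

section
/- Consider the system on ℝ^6 (coordinates γ₁,γ₂,γ₃,p₁,p₂,p₃): γ̇ᵢ = (ε²/τ)pᵢ, ṗ₁ = (κ₁₂/τ)p₂ + μγ₁, ṗ₂ = -(κ₁₂/τ)p₁ + μγ₂, ṗ₃ = μγ₃, with μ = (κ₁₂/τ)(p₁γ₂ - p₂γ₁) - (ε²/τ)(p₁² + p₂² + p₃²). Then Φ = γ₁p₂ - γ₂p₁ + (κ₁₂/(2ε²))(γ₁² + γ₂²) is a first integral: dΦ/dt = 0 along any solution. -/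
/-! The radial force `μ γ` exerts no torque, so the planar angular momentum `γ₁ p₂ - γ₂ p₁`
changes only through the gyroscopic term, at rate `-(κ₁₂/τ) ⟨γ, p⟩`. Since `γ̇ = (ε²/τ) p`, this
rate is `-(κ₁₂/(2ε²))` times the rate of change of `γ₁² + γ₂²`, and `Φ` is constant. -/

section PlanarGyroscopic

variable {a b m x₁ x₂ : ℝ} {γ₁ γ₂ p₁ p₂ : ℝ → ℝ} {t : ℝ}

theorem hasDerivAt_angularMomentum
    (hγ₁ : HasDerivAt γ₁ x₁ t) (hγ₂ : HasDerivAt γ₂ x₂ t)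
    (hp₁ : HasDerivAt p₁ (b * p₂ t + m * γ₁ t) t)
    (hp₂ : HasDerivAt p₂ (-b * p₁ t + m * γ₂ t) t)
    (hx : x₁ * p₂ t = x₂ * p₁ t) :
    HasDerivAt (fun s => γ₁ s * p₂ s - γ₂ s * p₁ s)
      (-b * (γ₁ t * p₁ t + γ₂ t * p₂ t)) t := by
  refine ((hγ₁.mul hp₂).sub (hγ₂.mul hp₁)).congr_deriv ?_
  linear_combination hx

theorem hasDerivAt_sqNorm (hγ₁ : HasDerivAt γ₁ (a * p₁ t) t) (hγ₂ : HasDerivAt γ₂ (a * p₂ t) t) :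
    HasDerivAt (fun s => γ₁ s ^ 2 + γ₂ s ^ 2) (2 * a * (γ₁ t * p₁ t + γ₂ t * p₂ t)) t :=
  ((hγ₁.pow 2).add (hγ₂.pow 2)).congr_deriv (by ring)

end PlanarGyroscopic

theorem demchenko3d_first_integral_general
    (ε τ κ₁₂ : ℝ) (hε : ε ≠ 0)
    (γ₁ γ₂ p₁ p₂ : ℝ → ℝ)
    (μ : ℝ → ℝ)
    (hγ₁ : ∀ t, HasDerivAt γ₁ ((ε^2 / τ) * p₁ t) t)
    (hγ₂ : ∀ t, HasDerivAt γ₂ ((ε^2 / τ) * p₂ t) t)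
    (hp₁ : ∀ t, HasDerivAt p₁ ((κ₁₂ / τ) * p₂ t + μ t * γ₁ t) t)
    (hp₂ : ∀ t, HasDerivAt p₂ (-(κ₁₂ / τ) * p₁ t + μ t * γ₂ t) t) (t : ℝ) :
    HasDerivAt (fun s => γ₁ s * p₂ s - γ₂ s * p₁ s
      + (κ₁₂ / (2 * ε^2)) * (γ₁ s ^ 2 + γ₂ s ^ 2)) 0 t := by
  have hL := hasDerivAt_angularMomentum (hγ₁ t) (hγ₂ t) (hp₁ t) (hp₂ t) (by ring)
  have hR := (hasDerivAt_sqNorm (hγ₁ t) (hγ₂ t)).const_mul (κ₁₂ / (2 * ε ^ 2))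
  refine (hL.add hR).congr_deriv ?_
  field_simp
  ring

/-- for the reduced three-dimensional Demchenko system without
twisting, `Φ = γ₁p₂ - γ₂p₁ + (κ₁₂/(2ε²))(γ₁² + γ₂²)` is a first integral. -/
theorem demchenko3d_first_integral
    (ε τ κ₁₂ : ℝ) (hε : ε ≠ 0) (hτ : τ ≠ 0)
    (γ₁ γ₂ γ₃ p₁ p₂ p₃ : ℝ → ℝ)
    (μ : ℝ → ℝ)
    (hμ : ∀ t, μ t = (κ₁₂ / τ) * (p₁ t * γ₂ t - p₂ t * γ₁ t)
        - (ε^2 / τ) * (p₁ t ^ 2 + p₂ t ^ 2 + p₃ t ^ 2))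
    (hγ₁ : ∀ t, HasDerivAt γ₁ ((ε^2 / τ) * p₁ t) t)
    (hγ₂ : ∀ t, HasDerivAt γ₂ ((ε^2 / τ) * p₂ t) t)
    (hγ₃ : ∀ t, HasDerivAt γ₃ ((ε^2 / τ) * p₃ t) t)
    (hp₁ : ∀ t, HasDerivAt p₁ ((κ₁₂ / τ) * p₂ t + μ t * γ₁ t) t)
    (hp₂ : ∀ t, HasDerivAt p₂ (-(κ₁₂ / τ) * p₁ t + μ t * γ₂ t) t)
    (hp₃ : ∀ t, HasDerivAt p₃ (μ t * γ₃ t) t) (t : ℝ) :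
    HasDerivAt (fun s => γ₁ s * p₂ s - γ₂ s * p₁ s
      + (κ₁₂ / (2 * ε^2)) * (γ₁ s ^ 2 + γ₂ s ^ 2)) 0 t :=
  demchenko3d_first_integral_general ε τ κ₁₂ hε γ₁ γ₂ p₁ p₂ μ hγ₁ hγ₂ hp₁ hp₂ t
end

section
/- Consider the system on ℝ^8 (coordinates γ₁,…,γ₄,p₁,…,p₄): γ̇ᵢ = (ε²/τ)pᵢ for i=1,…,4; ṗ₁ = (κ₁₂/τ)p₂ + μγ₁, ṗ₂ = -(κ₁₂/τ)p₁ + μγ₂, ṗ₃ = (κ₃₄/τ)p₄ + μγ₃, ṗ₄ = -(κ₃₄/τ)p₃ + μγ₄, where μ = (1/τ)(κ₁₂(p₁γ₂ - p₂γ₁) + κ₃₄(p₃γ₄ - p₄γ₃)) - (ε²/τ)(p₁²+p₂²+p₃²+p₄²). Then Φ₁₂ = γ₁p₂ - γ₂p₁ + (κ₁₂/(2ε²))(γ₁²+γ₂²) and Φ₃₄ = γ₃p₄ - γ₄p₃ + (κ₃₄/(2ε²))(γ₃²+γ₄²) are first integrals along any solution. -/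
/-! Each pair `(γᵢ, γⱼ, pᵢ, pⱼ)` is a planar motion with velocity `a • p` whose momentum is
rotated at rate `b` and pushed radially by `μ • γ`. The radial force does not change the angular
momentum `γ₁p₂ - γ₂p₁`; the rotation changes it by `-b (γ₁p₁ + γ₂p₂)`, which is exactly
`-(b / 2a)` times the derivative of `γ₁² + γ₂²`. -/

theorem hasDerivAt_angularMomentum_add_sq_eq_zero {a b c : ℝ} (hc : 2 * a * c = b)
    {γ₁ γ₂ p₁ p₂ μ : ℝ → ℝ} {t : ℝ}
    (hγ₁ : HasDerivAt γ₁ (a * p₁ t) t) (hγ₂ : HasDerivAt γ₂ (a * p₂ t) t)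
    (hp₁ : HasDerivAt p₁ (b * p₂ t + μ t * γ₁ t) t)
    (hp₂ : HasDerivAt p₂ (-b * p₁ t + μ t * γ₂ t) t) :
    HasDerivAt (fun s => γ₁ s * p₂ s - γ₂ s * p₁ s + c * (γ₁ s ^ 2 + γ₂ s ^ 2)) 0 t := by
  refine (((hγ₁.mul hp₂).sub (hγ₂.mul hp₁)).add
    (((hγ₁.pow 2).add (hγ₂.pow 2)).const_mul c)).congr_deriv ?_
  rw [← hc]
  ring

theorem demchenko4d_first_integrals_general
    (ε τ κ₁₂ κ₃₄ : ℝ) (hε : ε ≠ 0)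
    (γ₁ γ₂ γ₃ γ₄ p₁ p₂ p₃ p₄ : ℝ → ℝ) (μ : ℝ → ℝ)
    (hγ₁ : ∀ t, HasDerivAt γ₁ ((ε^2 / τ) * p₁ t) t)
    (hγ₂ : ∀ t, HasDerivAt γ₂ ((ε^2 / τ) * p₂ t) t)
    (hγ₃ : ∀ t, HasDerivAt γ₃ ((ε^2 / τ) * p₃ t) t)
    (hγ₄ : ∀ t, HasDerivAt γ₄ ((ε^2 / τ) * p₄ t) t)
    (hp₁ : ∀ t, HasDerivAt p₁ ((κ₁₂ / τ) * p₂ t + μ t * γ₁ t) t)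
    (hp₂ : ∀ t, HasDerivAt p₂ (-(κ₁₂ / τ) * p₁ t + μ t * γ₂ t) t)
    (hp₃ : ∀ t, HasDerivAt p₃ ((κ₃₄ / τ) * p₄ t + μ t * γ₃ t) t)
    (hp₄ : ∀ t, HasDerivAt p₄ (-(κ₃₄ / τ) * p₃ t + μ t * γ₄ t) t) (t : ℝ) :
    HasDerivAt (fun s => γ₁ s * p₂ s - γ₂ s * p₁ s
      + (κ₁₂ / (2 * ε^2)) * (γ₁ s ^ 2 + γ₂ s ^ 2)) 0 t ∧
    HasDerivAt (fun s => γ₃ s * p₄ s - γ₄ s * p₃ s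
      + (κ₃₄ / (2 * ε^2)) * (γ₃ s ^ 2 + γ₄ s ^ 2)) 0 t := by
  have coeff (κ : ℝ) : 2 * (ε ^ 2 / τ) * (κ / (2 * ε ^ 2)) = κ / τ := by
    field_simp
  exact ⟨hasDerivAt_angularMomentum_add_sq_eq_zero (coeff κ₁₂) (hγ₁ t) (hγ₂ t) (hp₁ t) (hp₂ t),
    hasDerivAt_angularMomentum_add_sq_eq_zero (coeff κ₃₄) (hγ₃ t) (hγ₄ t) (hp₃ t) (hp₄ t)⟩

/-- for the reduced generalized Demchenko system without twisting
in ℝ⁴, `Φ₁₂ = γ₁p₂ - γ₂p₁ + (κ₁₂/(2ε²))(γ₁²+γ₂²)` and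
`Φ₃₄ = γ₃p₄ - γ₄p₃ + (κ₃₄/(2ε²))(γ₃²+γ₄²)` are first integrals. -/
theorem demchenko4d_first_integrals
    (ε τ κ₁₂ κ₃₄ : ℝ) (hε : ε ≠ 0) (hτ : τ ≠ 0)
    (γ₁ γ₂ γ₃ γ₄ p₁ p₂ p₃ p₄ : ℝ → ℝ) (μ : ℝ → ℝ)
    (hμ : ∀ t, μ t = (1 / τ) * (κ₁₂ * (p₁ t * γ₂ t - p₂ t * γ₁ t)
        + κ₃₄ * (p₃ t * γ₄ t - p₄ t * γ₃ t))
        - (ε^2 / τ) * (p₁ t ^ 2 + p₂ t ^ 2 + p₃ t ^ 2 + p₄ t ^ 2))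
    (hγ₁ : ∀ t, HasDerivAt γ₁ ((ε^2 / τ) * p₁ t) t)
    (hγ₂ : ∀ t, HasDerivAt γ₂ ((ε^2 / τ) * p₂ t) t)
    (hγ₃ : ∀ t, HasDerivAt γ₃ ((ε^2 / τ) * p₃ t) t)
    (hγ₄ : ∀ t, HasDerivAt γ₄ ((ε^2 / τ) * p₄ t) t)
    (hp₁ : ∀ t, HasDerivAt p₁ ((κ₁₂ / τ) * p₂ t + μ t * γ₁ t) t)
    (hp₂ : ∀ t, HasDerivAt p₂ (-(κ₁₂ / τ) * p₁ t + μ t * γ₂ t) t)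
    (hp₃ : ∀ t, HasDerivAt p₃ ((κ₃₄ / τ) * p₄ t + μ t * γ₃ t) t)
    (hp₄ : ∀ t, HasDerivAt p₄ (-(κ₃₄ / τ) * p₃ t + μ t * γ₄ t) t) (t : ℝ) :
    HasDerivAt (fun s => γ₁ s * p₂ s - γ₂ s * p₁ s
      + (κ₁₂ / (2 * ε^2)) * (γ₁ s ^ 2 + γ₂ s ^ 2)) 0 t ∧
    HasDerivAt (fun s => γ₃ s * p₄ s - γ₄ s * p₃ s
      + (κ₃₄ / (2 * ε^2)) * (γ₃ s ^ 2 + γ₄ s ^ 2)) 0 t :=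
  demchenko4d_first_integrals_general ε τ κ₁₂ κ₃₄ hε γ₁ γ₂ γ₃ γ₄ p₁ p₂ p₃ p₄ μ hγ₁ hγ₂ hγ₃ hγ₄ hp₁
    hp₂ hp₃ hp₄ t
end

section
/- Consider the vector field X on ℝ^{2n} given in coordinates (x, p) by ẋᵢ = ∂h/∂pᵢ, ṗᵢ = -∂h/∂xᵢ + Σ_{j,k} C^k_{ij}(x) p_k ∂h/∂p_j + Σ_j f_{ij}(x) ∂h/∂p_j, where h(x,p) = ½Σ g^{ij}(x)p_ip_j + v(x), the C^k_{ij} are skew in (i,j), and f_{ij} = -f_{ji}. Then for a nowhere-vanishing function ν(x), the divergence of νX with respect to Lebesgue measure equals Σᵢ (∂ν/∂xᵢ - ν Σⱼ C^j_{ij}(x)) ∂h/∂pᵢ. Consequently νX is divergence-free for all momenta p if and only if ∂(ln ν)/∂xᵢ = Σⱼ C^j_{ij}(x) for all i. -/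
/-- `∂h/∂pᵢ = Σⱼ g^{ij}(x)pⱼ` for `h(x,p) = ½Σ g^{ij}(x)pᵢpⱼ + v(x)`. -/
def hpDeriv {n : ℕ} (g : (Fin n → ℝ) → Fin n → Fin n → ℝ)
    (x p : Fin n → ℝ) (i : Fin n) : ℝ :=
  ∑ j, g x i j * p j

/-- `∂h/∂xᵢ` for `h(x,p) = ½Σ g^{jk}(x)pⱼp_k + v(x)`. -/
noncomputable def hxDeriv {n : ℕ} (g : (Fin n → ℝ) → Fin n → Fin n → ℝ)
    (v : (Fin n → ℝ) → ℝ) (x p : Fin n → ℝ) (i : Fin n) : ℝ :=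
  fderiv ℝ (fun y => (1/2 : ℝ) * ∑ j, ∑ k, g y j k * p j * p k + v y) x (Pi.single i 1)

/-- The `p`-component of the reduced gyroscopic Chaplygin vector field:
`ṗᵢ = -∂h/∂xᵢ + Σ_{j,k} C^k_{ij} p_k ∂h/∂pⱼ + Σⱼ f_{ij} ∂h/∂pⱼ`. -/
noncomputable def XpField {n : ℕ} (g : (Fin n → ℝ) → Fin n → Fin n → ℝ)
    (v : (Fin n → ℝ) → ℝ) (C : (Fin n → ℝ) → Fin n → Fin n → Fin n → ℝ)
    (f : (Fin n → ℝ) → Fin n → Fin n → ℝ) (x p : Fin n → ℝ) (i : Fin n) : ℝ :=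
  -hxDeriv g v x p i + (∑ k, ∑ j, C x k i j * p k * hpDeriv g x p j)
    + ∑ j, f x i j * hpDeriv g x p j

/-- The divergence of `ν·X` with respect to the Lebesgue measure `dx dp`. -/
noncomputable def divNuX {n : ℕ} (g : (Fin n → ℝ) → Fin n → Fin n → ℝ)
    (v ν : (Fin n → ℝ) → ℝ) (C : (Fin n → ℝ) → Fin n → Fin n → Fin n → ℝ)
    (f : (Fin n → ℝ) → Fin n → Fin n → ℝ) (x p : Fin n → ℝ) : ℝ :=
  (∑ i, fderiv ℝ (fun y => ν y * hpDeriv g y p i) x (Pi.single i 1))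
    + ∑ i, fderiv ℝ (fun q => ν x * XpField g v C f x q i) p (Pi.single i 1)

/-! The `x`-derivatives of `ν ∂h/∂pᵢ` give `∂ᵢν ∂h/∂pᵢ + ν Σⱼ (∂ᵢg^{ij}) pⱼ`, and the second term
is cancelled by the `pᵢ`-derivative of `-∂h/∂xᵢ` (this is where the symmetry of `g` enters).
In the rest of the `p`-trace of `ṗ`, the contractions of the tensors `C^k_{ij}` and `f_{ij}`, skew
in `(i, j)`, against the symmetric `g^{ij}` vanish, except for the term from `∂p_k/∂pᵢ`, which
contributes `-ν Σᵢ Θᵢ ∂h/∂pᵢ`. Since `∂h/∂p = g p` with `g` positive definite, this linear form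
in `p` vanishes identically iff its coefficients `∂ᵢν - ν Θᵢ` do, i.e. iff `d ln ν = Θ`. -/

open Finset
open scoped Matrix

theorem fderiv_eval_apply {𝕜 ι F : Type*} [NontriviallyNormedField 𝕜] [Fintype ι]
    [NormedAddCommGroup F] [NormedSpace 𝕜 F] (j : ι) (p v : ι → F) :
    fderiv 𝕜 (fun y : ι → F => y j) p v = v j := by
  rw [(hasFDerivAt_apply j p).fderiv]
  rfl

theorem sum_sum_mul_eq_zero_of_skew_of_symm {ι R : Type*} [Fintype ι] [Ring R]
    [NoZeroDivisors R] [CharZero R] {A B : ι → ι → R} (hA : ∀ i j, A i j = -A j i)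
    (hB : ∀ i j, B i j = B j i) : ∑ i, ∑ j, A i j * B i j = 0 := by
  refine self_eq_neg.mp ?_
  calc ∑ i, ∑ j, A i j * B i j
      = ∑ i, ∑ j, A j i * B j i := sum_comm
    _ = -∑ i, ∑ j, A i j * B i j := by
      simp only [← sum_neg_distrib]
      exact sum_congr rfl fun i _ => sum_congr rfl fun j _ => by rw [hA j i, hB j i, neg_mul]

theorem Matrix.PosDef.forall_dotProduct_mulVec_eq_zero_iff {ι R : Type*} [Fintype ι]
    [CommRing R] [PartialOrder R] [StarRing R] [StarOrderedRing R] {M : Matrix ι ι R}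
    (hM : M.PosDef) {a : ι → R} : (∀ p, star a ⬝ᵥ (M *ᵥ p) = 0) ↔ a = 0 := by
  refine ⟨fun h => ?_, fun ha p => by simp [ha]⟩
  by_contra ha
  exact (hM.dotProduct_mulVec_pos ha).ne' (h a)

section ChaplyginField

variable {n : ℕ} {g : (Fin n → ℝ) → Fin n → Fin n → ℝ} {v ν : (Fin n → ℝ) → ℝ}
  {C : (Fin n → ℝ) → Fin n → Fin n → Fin n → ℝ} {f : (Fin n → ℝ) → Fin n → Fin n → ℝ}

theorem forall_sum_mul_hpDeriv_eq_zero_iff {x : Fin n → ℝ} (hg_pos : (Matrix.of (g x)).PosDef)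
    {a : Fin n → ℝ} : (∀ p, ∑ i, a i * hpDeriv g x p i = 0) ↔ ∀ i, a i = 0 := by
  have h := hg_pos.forall_dotProduct_mulVec_eq_zero_iff (a := a)
  simp only [star_trivial, dotProduct, funext_iff, Pi.zero_apply] at h
  exact h

@[fun_prop]
theorem differentiable_hpDeriv_momentum (x : Fin n → ℝ) (l : Fin n) :
    Differentiable ℝ (fun q => hpDeriv g x q l) := by
  unfold hpDeriv
  fun_prop

theorem fderiv_hpDeriv_momentum (x p w : Fin n → ℝ) (l : Fin n) :
    fderiv ℝ (fun q => hpDeriv g x q l) p w = ∑ j, g x l j * w j := by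
  simp (disch := fun_prop) [hpDeriv, fderiv_fun_sum, fderiv_const_mul, fderiv_eval_apply]

theorem fderiv_mul_hpDeriv_position (hg_diff : ∀ i j, Differentiable ℝ (fun x => g x i j))
    (hν_diff : Differentiable ℝ ν) (x p w : Fin n → ℝ) (l : Fin n) :
    fderiv ℝ (fun y => ν y * hpDeriv g y p l) x w
      = fderiv ℝ ν x w * hpDeriv g x p l + ν x * ∑ j, fderiv ℝ (fun y => g y l j) x w * p j := by
  simp (disch := fun_prop) [hpDeriv, fderiv_fun_mul, fderiv_fun_sum, mul_comm (p _)]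
  ring

theorem hxDeriv_eq (hg_diff : ∀ i j, Differentiable ℝ (fun x => g x i j))
    (hv_diff : Differentiable ℝ v) (x q : Fin n → ℝ) (i : Fin n) :
    hxDeriv g v x q i
      = (1/2 : ℝ) * ∑ j, ∑ k, fderiv ℝ (fun y => g y j k) x (Pi.single i 1) * q j * q k
        + fderiv ℝ v x (Pi.single i 1) := by
  simp (disch := fun_prop) [hxDeriv, fderiv_fun_add, fderiv_fun_sum, fderiv_const_mul,
    fderiv_mul_const]
  ac_rfl

theorem differentiable_hxDeriv_momentum (hg_diff : ∀ i j, Differentiable ℝ (fun x => g x i j))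
    (hv_diff : Differentiable ℝ v) (x : Fin n → ℝ) (i : Fin n) :
    Differentiable ℝ (fun q => hxDeriv g v x q i) := by
  simp only [hxDeriv_eq hg_diff hv_diff]
  fun_prop

theorem fderiv_hxDeriv_momentum (hg_sym : ∀ x i j, g x i j = g x j i)
    (hg_diff : ∀ i j, Differentiable ℝ (fun x => g x i j))
    (hv_diff : Differentiable ℝ v) (x p : Fin n → ℝ) (i m : Fin n) :
    fderiv ℝ (fun q => hxDeriv g v x q i) p (Pi.single m 1)
      = ∑ j, fderiv ℝ (fun y => g y m j) x (Pi.single i 1) * p j := by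
  have hD : ∀ j k, fderiv ℝ (fun y => g y j k) x = fderiv ℝ (fun y => g y k j) x := fun j k => by
    simp only [hg_sym _ j k]
  simp only [hxDeriv_eq hg_diff hv_diff]
  simp (disch := fun_prop) [fderiv_fun_sum, fderiv_const_mul, fderiv_fun_mul, fderiv_eval_apply,
    Pi.single_apply, sum_add_distrib, hD _ m, mul_comm (p _)]
  ring

theorem differentiable_XpField_momentum (hg_diff : ∀ i j, Differentiable ℝ (fun x => g x i j))
    (hv_diff : Differentiable ℝ v) (x : Fin n → ℝ) (i : Fin n) :
    Differentiable ℝ (fun q => XpField g v C f x q i) := by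
  have hhx := differentiable_hxDeriv_momentum hg_diff hv_diff x i
  unfold XpField
  fun_prop

theorem fderiv_XpField_momentum (hg_sym : ∀ x i j, g x i j = g x j i)
    (hg_diff : ∀ i j, Differentiable ℝ (fun x => g x i j))
    (hv_diff : Differentiable ℝ v) (x p : Fin n → ℝ) (i m : Fin n) :
    fderiv ℝ (fun q => XpField g v C f x q i) p (Pi.single m 1)
      = -∑ j, fderiv ℝ (fun y => g y m j) x (Pi.single i 1) * p j
        + ∑ j, C x m i j * hpDeriv g x p j
        + ∑ k, ∑ j, C x k i j * p k * g x j m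
        + ∑ j, f x i j * g x j m := by
  have hhx := differentiable_hxDeriv_momentum hg_diff hv_diff x i
  simp (disch := fun_prop) [XpField, fderiv_fun_add, fderiv_fun_sum, fderiv_const_mul,
    fderiv_fun_mul, fderiv_eval_apply, fderiv_hpDeriv_momentum,
    fderiv_hxDeriv_momentum hg_sym hg_diff hv_diff, Pi.single_apply, sum_add_distrib,
    sum_ite_irrel, mul_comm (hpDeriv g x p _)]
  ring

theorem sum_fderiv_XpField_momentum (hg_sym : ∀ x i j, g x i j = g x j i)
    (hg_diff : ∀ i j, Differentiable ℝ (fun x => g x i j)) (hv_diff : Differentiable ℝ v)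
    (hC_skew : ∀ x k i j, C x k i j = -C x k j i) (hf_skew : ∀ x i j, f x i j = -f x j i)
    (x p : Fin n → ℝ) :
    ∑ i, fderiv ℝ (fun q => XpField g v C f x q i) p (Pi.single i 1)
      = -∑ i, ∑ j, fderiv ℝ (fun y => g y i j) x (Pi.single i 1) * p j
        - ∑ i, (∑ j, C x j i j) * hpDeriv g x p i := by
  have hC : ∑ i, ∑ j, C x i i j * hpDeriv g x p j
      = -∑ i, (∑ j, C x j i j) * hpDeriv g x p i := by
    rw [sum_comm, ← sum_neg_distrib]
    refine sum_congr rfl fun j _ => ?_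
    simp only [← sum_mul, ← neg_mul, ← sum_neg_distrib, ← hC_skew]
  have hCg : ∑ i, ∑ k, ∑ j, C x k i j * p k * g x j i = 0 := by
    rw [sum_comm]
    refine sum_eq_zero fun k _ => ?_
    have hk := sum_sum_mul_eq_zero_of_skew_of_symm (hC_skew x k) (fun i j => hg_sym x j i)
    simp [mul_right_comm _ (p k), ← sum_mul, hk]
  have hfg : ∑ i, ∑ j, f x i j * g x j i = 0 :=
    sum_sum_mul_eq_zero_of_skew_of_symm (hf_skew x) (fun i j => hg_sym x j i)
  simp only [fderiv_XpField_momentum hg_sym hg_diff hv_diff, sum_add_distrib, sum_neg_distrib,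
    hC, hCg, hfg]
  ring

theorem divNuX_eq (hg_sym : ∀ x i j, g x i j = g x j i)
    (hg_diff : ∀ i j, Differentiable ℝ (fun x => g x i j)) (hv_diff : Differentiable ℝ v)
    (hν_diff : Differentiable ℝ ν)
    (hC_skew : ∀ x k i j, C x k i j = -C x k j i) (hf_skew : ∀ x i j, f x i j = -f x j i)
    (x p : Fin n → ℝ) :
    divNuX g v ν C f x p
      = ∑ i, (fderiv ℝ ν x (Pi.single i 1) - ν x * ∑ j, C x j i j) * hpDeriv g x p i := by
  have hXp := differentiable_XpField_momentum (C := C) (f := f) hg_diff hv_diff x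
  simp (disch := fun_prop) only [divNuX, fderiv_mul_hpDeriv_position hg_diff hν_diff,
    fderiv_const_mul]
  simp only [smul_apply, smul_eq_mul, ← mul_sum,
    sum_fderiv_XpField_momentum hg_sym hg_diff hv_diff hC_skew hf_skew, sum_add_distrib, sub_mul,
    sum_sub_distrib, mul_assoc]
  ring

end ChaplyginField

/-- the divergence of `νX` equals
`Σᵢ (∂ν/∂xᵢ - ν Σⱼ C^j_{ij}) ∂h/∂pᵢ`; consequently `νX` is divergence-free
for all momenta iff `∂(ln ν)/∂xᵢ = Σⱼ C^j_{ij}(x)` for all `i`, i.e.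
`∂ν/∂xᵢ = ν Σⱼ C^j_{ij}`. -/
theorem divergence_invariant_measure {n : ℕ}
    (g : (Fin n → ℝ) → Fin n → Fin n → ℝ)
    (v ν : (Fin n → ℝ) → ℝ)
    (C : (Fin n → ℝ) → Fin n → Fin n → Fin n → ℝ)
    (f : (Fin n → ℝ) → Fin n → Fin n → ℝ)
    (hg_sym : ∀ x i j, g x i j = g x j i)
    (hg_pos : ∀ x, (Matrix.of (g x)).PosDef)
    (hg_diff : ∀ i j, Differentiable ℝ (fun x => g x i j))
    (hv_diff : Differentiable ℝ v)
    (hν_diff : Differentiable ℝ ν) (hν_pos : ∀ x, 0 < ν x)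
    (hC_skew : ∀ x k i j, C x k i j = -C x k j i)
    (hf_skew : ∀ x i j, f x i j = -f x j i) :
    (∀ x p, divNuX g v ν C f x p
      = ∑ i, (fderiv ℝ ν x (Pi.single i 1) - ν x * ∑ j, C x j i j)
          * hpDeriv g x p i) ∧
    ((∀ x p, divNuX g v ν C f x p = 0) ↔
      (∀ x i, fderiv ℝ (fun y => Real.log (ν y)) x (Pi.single i 1)
        = ∑ j, C x j i j)) := by
  have hdiv := divNuX_eq hg_sym hg_diff hv_diff hν_diff hC_skew hf_skew
  have hlog : ∀ x i, fderiv ℝ (fun y => Real.log (ν y)) x (Pi.single i 1)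
      = (ν x)⁻¹ * fderiv ℝ ν x (Pi.single i 1) := fun x i => by
    rw [fderiv.log (hν_diff x) (hν_pos x).ne']
    rfl
  refine ⟨hdiv, ?_⟩
  simp only [hdiv, hlog]
  refine forall_congr' fun x => ?_
  refine (forall_sum_mul_hpDeriv_eq_zero_iff (hg_pos x)).trans (forall_congr' fun i => ?_)
  rw [sub_eq_zero, inv_mul_eq_iff_eq_mul₀ (hν_pos x).ne']
end

section
/- Consider the system on TS³ ⊂ ℝ^8 in coordinates (ρ₁, φ₁, ρ₃, φ₃) with constraint ρ₁² + ρ₃² = 1, and first integrals h = (τ/(2ε²))(ρ̇₁² + ρ₁²φ̇₁² + ρ̇₃² + ρ₃²φ̇₃²), Φ₁₂ = (τ/ε²)ρ₁²φ̇₁ + (κ₁₂/(2ε²))ρ₁², Φ₃₄ = (τ/ε²)ρ₃²φ̇₃ + (κ₃₄/(2ε²))ρ₃². Then, setting u = ρ₁² and eliminating φ̇₁, φ̇₃, ρ₃, ρ̇₃ via the constraint and the integrals (with ρ₁ρ₃ ≠ 0), the quantity u̇² equals the cubic polynomial P₃(u) = a₀u³ + a₁u² + a₂u + a₃ with a₀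 = (κ₁₂² - κ₃₄²)/τ², a₃ = -4ε⁴Φ₁₂²/τ², a₁ = -8ε²h/τ - (2κ₃₄/τ²)(2ε²Φ₃₄ - κ₃₄) - κ₁₂²/τ² - 4ε²κ₁₂Φ₁₂/τ², a₂ = 8ε²h/τ - (2ε²Φ₃₄ - κ₃₄)²/τ² + 4ε²κ₁₂Φ₁₂/τ² + 4ε⁴Φ₁₂²/τ². -/
/-- in the four-dimensional generalized Demchenko case, with
`ρ₁² + ρ₃² = 1` (hence `ρ₁ρ̇₁ + ρ₃ρ̇₃ = 0`) and the values of the first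
integrals `h`, `Φ₁₂`, `Φ₃₄` fixed, the quantity `u̇² = (2ρ₁ρ̇₁)²`, for
`u = ρ₁²`, equals the cubic `P₃(u) = a₀u³ + a₁u² + a₂u + a₃` with the stated
coefficients. -/
theorem demchenko4d_cubic_identity
    (ε τ κ₁₂ κ₃₄ h Φ₁₂ Φ₃₄ : ℝ) (hε : ε ≠ 0) (hτ : τ ≠ 0)
    (ρ₁ ρ₃ ρ₁' ρ₃' φ₁' φ₃' : ℝ)
    (hρ₁ : ρ₁ ≠ 0) (hρ₃ : ρ₃ ≠ 0)
    (hconstraint : ρ₁^2 + ρ₃^2 = 1)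
    (hconstraint' : ρ₁ * ρ₁' + ρ₃ * ρ₃' = 0)
    (hh : h = (τ / (2 * ε^2)) * (ρ₁'^2 + ρ₁^2 * φ₁'^2 + ρ₃'^2 + ρ₃^2 * φ₃'^2))
    (hΦ₁₂ : Φ₁₂ = (τ / ε^2) * ρ₁^2 * φ₁' + (κ₁₂ / (2 * ε^2)) * ρ₁^2)
    (hΦ₃₄ : Φ₃₄ = (τ / ε^2) * ρ₃^2 * φ₃' + (κ₃₄ / (2 * ε^2)) * ρ₃^2) :
    (2 * ρ₁ * ρ₁')^2
      = ((κ₁₂^2 - κ₃₄^2) / τ^2) * (ρ₁^2)^3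
        + (-(8 * ε^2 * h / τ) - (2 * κ₃₄ / τ^2) * (2 * ε^2 * Φ₃₄ - κ₃₄)
            - κ₁₂^2 / τ^2 - 4 * ε^2 * κ₁₂ * Φ₁₂ / τ^2) * (ρ₁^2)^2
        + (8 * ε^2 * h / τ - (2 * ε^2 * Φ₃₄ - κ₃₄)^2 / τ^2
            + 4 * ε^2 * κ₁₂ * Φ₁₂ / τ^2 + 4 * ε^4 * Φ₁₂^2 / τ^2) * (ρ₁^2)
        + (-(4 * ε^4 * Φ₁₂^2 / τ^2)) := by
  subst hh hΦ₁₂ hΦ₃₄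
  have h1 : (1:ℝ) - ρ₁^2 ≠ 0 := by
    have : ρ₃^2 > 0 := by positivity
    nlinarith
  have hr3sq : ρ₃^2 = 1 - ρ₁^2 := by linarith
  have hr3p2 : ρ₃'^2 = ρ₁^2*ρ₁'^2/(1-ρ₁^2) := by
    rw [eq_div_iff h1]
    linear_combination (ρ₃*ρ₃' - ρ₁*ρ₁')*hconstraint' - ρ₃'^2*hconstraint
  rw [hr3p2, hr3sq]
  field_simp
  ring
end
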